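/- Let n = 2m with m = 2r and r ≥ 2. Then there exist three linearly independent nondegenerate symmetric bilinear forms B₁, B₂, B₃ on ℝⁿ, each of signature (m,m), and a subgroup G of GL(n,ℝ) preserving B₁, B₂ and B₃ (i.e. Bᵢ(g·v, g·w) = Bᵢ(v,w) for all g ∈ G, v,w ∈ ℝⁿ, i = 1,2,3) such that G acts irreducibly on ℝⁿ, i.e. the only G-invariant subspaces of ℝⁿ are 0 and ℝⁿ. -/

import Mathlib

open Matrix

namespace TF22
noncomputable section
set_option synthInstance.maxHeartbeats 400000
set_option maxHeartbeats 1600000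

variable (r : ℕ)

/-- index packing -/
def ee : (Fin 4 × Fin r) ≃ Fin (2 * (2 * r)) :=
  finProdFinEquiv.trans (finCongr (by ring))

lemma ee_val (p : Fin 4 × Fin r) : ((ee r p : Fin (2*(2*r))) : ℕ) = p.2 + r * p.1 := rfl

/-- transport of vectors: from product side to `Fin n` side -/
def pk : ((Fin 4 × Fin r) → ℝ) ≃ₗ[ℝ] (Fin (2 * (2 * r)) → ℝ) :=
  LinearEquiv.funCongrLeft ℝ ℝ (ee r).symm

lemma pk_apply (x : (Fin 4 × Fin r) → ℝ) (i : Fin (2*(2*r))) :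
    pk r x i = x ((ee r).symm i) := rfl

lemma pk_symm_apply (v : Fin (2*(2*r)) → ℝ) (p : Fin 4 × Fin r) :
    (pk r).symm v p = v (ee r p) := by
  simp [pk, LinearEquiv.funCongrLeft]

/-- raw bilinear sum -/
def Bval (c : Fin 4 → ℝ) (σ : Fin 4 → Fin 4) (x y : (Fin 4 × Fin r) → ℝ) : ℝ :=
  ∑ p : Fin 4 × Fin r, c p.1 * x p * y (σ p.1, p.2)

def mkB (c : Fin 4 → ℝ) (σ : Fin 4 → Fin 4) :
    LinearMap.BilinForm ℝ ((Fin 4 × Fin r) → ℝ) :=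
  LinearMap.mk₂ ℝ (Bval r c σ)
    (fun x x' y => by
      simp [Bval, ← Finset.sum_add_distrib]; exact Finset.sum_congr rfl fun p _ => by ring)
    (fun a x y => by
      simp [Bval, Finset.mul_sum]; exact Finset.sum_congr rfl fun p _ => by ring)
    (fun x y y' => by
      simp [Bval, ← Finset.sum_add_distrib]; exact Finset.sum_congr rfl fun p _ => by ring)
    (fun a x y => by
      simp [Bval, Finset.mul_sum]; exact Finset.sum_congr rfl fun p _ => by ring)

def eps : Fin 4 → ℝ := ![1, 1, -1, -1]
def tau : Fin 4 → Fin 4 := ![2, 3, 0, 1]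
def rho : Fin 4 → Fin 4 := ![3, 2, 1, 0]
def eta : Fin 4 → ℝ := ![1, -1, -1, 1]

def b1 := mkB r (eps) id
def b2 := mkB r (fun _ => 1) tau
def b3 := mkB r eta rho

/-- the forms on `Fin n` side -/
def BB (b : LinearMap.BilinForm ℝ ((Fin 4 × Fin r) → ℝ)) :
    LinearMap.BilinForm ℝ (Fin (2*(2*r)) → ℝ) :=
  b.compl₁₂ ((pk r).symm : _ →ₗ[ℝ] _) ((pk r).symm : _ →ₗ[ℝ] _)

lemma BB_apply (b) (v w : Fin (2*(2*r)) → ℝ) :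
    BB r b v w = b ((pk r).symm v) ((pk r).symm w) := rfl



/-- build a `GL` element from a linear automorphism of `Fin n → ℝ` -/
def mkGL {ι : Type*} [Fintype ι] [DecidableEq ι]
    (f : (ι → ℝ) ≃ₗ[ℝ] (ι → ℝ)) : GL ι ℝ where
  val := LinearMap.toMatrix' (f : (ι → ℝ) →ₗ[ℝ] (ι → ℝ))
  inv := LinearMap.toMatrix' (f.symm : (ι → ℝ) →ₗ[ℝ] (ι → ℝ))
  val_inv := by
    rw [← LinearMap.toMatrix'_comp, ← LinearMap.toMatrix'_id (R := ℝ) (n := ι)]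
    congr 1; ext x : 1; simp
  inv_val := by
    rw [← LinearMap.toMatrix'_comp, ← LinearMap.toMatrix'_id (R := ℝ) (n := ι)]
    congr 1; ext x : 1; simp

lemma mkGL_mulVec {ι : Type*} [Fintype ι] [DecidableEq ι]
    (f : (ι → ℝ) ≃ₗ[ℝ] (ι → ℝ)) (v : ι → ℝ) :
    ((mkGL f : GL ι ℝ) : Matrix ι ι ℝ).mulVec v = f v := by
  have h : ((mkGL f : GL ι ℝ) : Matrix ι ι ℝ) =
      LinearMap.toMatrix' (f : (ι → ℝ) →ₗ[ℝ] (ι → ℝ)) := rfl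
  rw [h, ← Matrix.toLin'_apply, Matrix.toLin'_toMatrix']
  rfl

/-- lift an automorphism of the product side to `Fin n` side -/
def lift (f : ((Fin 4 × Fin r) → ℝ) ≃ₗ[ℝ] ((Fin 4 × Fin r) → ℝ)) :
    GL (Fin (2*(2*r))) ℝ :=
  mkGL (((pk r).symm.trans f).trans (pk r))

lemma lift_mulVec (f) (v : Fin (2*(2*r)) → ℝ) :
    ((lift r f : GL (Fin (2*(2*r))) ℝ) : Matrix (Fin (2*(2*r))) (Fin (2*(2*r))) ℝ).mulVec v
      = pk r (f ((pk r).symm v)) := by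
  rw [lift, mkGL_mulVec]; rfl


/-! ### Generators (product side) -/

section Gens
variable {r : ℕ}

/-- negate coordinate `m` -/
def Nfun (m : Fin r) (x : (Fin 4 × Fin r) → ℝ) : (Fin 4 × Fin r) → ℝ :=
  fun p => if p.2 = m then -x p else x p

def Nmap (m : Fin r) : ((Fin 4 × Fin r) → ℝ) →ₗ[ℝ] ((Fin 4 × Fin r) → ℝ) where
  toFun := Nfun m
  map_add' x y := by funext p; by_cases h : p.2 = m <;> simp [Nfun, h] <;> ring
  map_smul' a x := by funext p; by_cases h : p.2 = m <;> simp [Nfun, h] <;> ring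

def Neq (m : Fin r) : ((Fin 4 × Fin r) → ℝ) ≃ₗ[ℝ] ((Fin 4 × Fin r) → ℝ) :=
  LinearEquiv.ofLinear (Nmap m) (Nmap m)
    (by ext x p; by_cases h : p.2 = m <;> simp [Nmap, Nfun, h])
    (by ext x p; by_cases h : p.2 = m <;> simp [Nmap, Nfun, h])

lemma Neq_apply (m : Fin r) (x) (p) :
    Neq m x p = if p.2 = m then -x p else x p := rfl

/-- block action of `i` (left quaternion multiplication) -/
def iAct (B : Fin 4 → ℝ) : Fin 4 → ℝ := ![-B 1, B 0, -B 3, B 2]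
/-- block action of `j` -/
def jAct (B : Fin 4 → ℝ) : Fin 4 → ℝ := ![-B 2, B 3, B 0, -B 1]

def Lifun (x : (Fin 4 × Fin r) → ℝ) : (Fin 4 × Fin r) → ℝ :=
  fun p => iAct (fun s => x (s, p.2)) p.1
def Liinvfun (x : (Fin 4 × Fin r) → ℝ) : (Fin 4 × Fin r) → ℝ :=
  fun p => ![x (1, p.2), -x (0, p.2), x (3, p.2), -x (2, p.2)] p.1

def Limap : ((Fin 4 × Fin r) → ℝ) →ₗ[ℝ] ((Fin 4 × Fin r) → ℝ) where
  toFun := Lifun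
  map_add' x y := by
    funext p; obtain ⟨s, l⟩ := p; fin_cases s <;> simp [Lifun, iAct] <;> ring
  map_smul' a x := by
    funext p; obtain ⟨s, l⟩ := p; fin_cases s <;> simp [Lifun, iAct] <;> ring

def Liinvmap : ((Fin 4 × Fin r) → ℝ) →ₗ[ℝ] ((Fin 4 × Fin r) → ℝ) where
  toFun := Liinvfun
  map_add' x y := by
    funext p; obtain ⟨s, l⟩ := p; fin_cases s <;> simp [Liinvfun] <;> ring
  map_smul' a x := by
    funext p; obtain ⟨s, l⟩ := p; fin_cases s <;> simp [Liinvfun] <;> ring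

def Lieq : ((Fin 4 × Fin r) → ℝ) ≃ₗ[ℝ] ((Fin 4 × Fin r) → ℝ) :=
  LinearEquiv.ofLinear Limap Liinvmap
    (by ext x p; obtain ⟨s, l⟩ := p
        fin_cases s <;> simp [Limap, Liinvmap, Lifun, Liinvfun, iAct])
    (by ext x p; obtain ⟨s, l⟩ := p
        fin_cases s <;> simp [Limap, Liinvmap, Lifun, Liinvfun, iAct])

lemma Lieq_apply (x : (Fin 4 × Fin r) → ℝ) (p) :
    Lieq x p = ![-x (1, p.2), x (0, p.2), -x (3, p.2), x (2, p.2)] p.1 := rfl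

/-- swap coordinates `m, m'` -/
def Pfun (m m' : Fin r) (x : (Fin 4 × Fin r) → ℝ) : (Fin 4 × Fin r) → ℝ :=
  fun p => x (p.1, Equiv.swap m m' p.2)

def Pmap (m m' : Fin r) : ((Fin 4 × Fin r) → ℝ) →ₗ[ℝ] ((Fin 4 × Fin r) → ℝ) where
  toFun := Pfun m m'
  map_add' x y := by funext p; simp [Pfun]
  map_smul' a x := by funext p; simp [Pfun]

def Peq (m m' : Fin r) : ((Fin 4 × Fin r) → ℝ) ≃ₗ[ℝ] ((Fin 4 × Fin r) → ℝ) :=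
  LinearEquiv.ofLinear (Pmap m m') (Pmap m m')
    (by refine LinearMap.ext fun x => funext fun p => ?_
        show x (p.1, Equiv.swap m m' (Equiv.swap m m' p.2)) = x p
        rw [Equiv.swap_apply_self])
    (by refine LinearMap.ext fun x => funext fun p => ?_
        show x (p.1, Equiv.swap m m' (Equiv.swap m m' p.2)) = x p
        rw [Equiv.swap_apply_self])

lemma Peq_apply (m m' : Fin r) (x) (p) :
    Peq m m' x p = x (p.1, Equiv.swap m m' p.2) := rfl

/-- hyperbolic j-mixer between coordinates `l0, l1` with parameter sign `e = ±1` -/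
def Tfun (l0 l1 : Fin r) (e : ℝ) (x : (Fin 4 × Fin r) → ℝ) : (Fin 4 × Fin r) → ℝ :=
  fun p =>
    if p.2 = l0 then (5/4) * x (p.1, l0) + (e * (3/4)) * jAct (fun s => x (s, l1)) p.1
    else if p.2 = l1 then (-(e * (3/4))) * jAct (fun s => x (s, l0)) p.1 + (5/4) * x (p.1, l1)
    else x p

def Tmap (l0 l1 : Fin r) (e : ℝ) :
    ((Fin 4 × Fin r) → ℝ) →ₗ[ℝ] ((Fin 4 × Fin r) → ℝ) where
  toFun := Tfun l0 l1 e
  map_add' x y := by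
    funext p; obtain ⟨s, l⟩ := p
    by_cases h0 : l = l0
    · fin_cases s <;> simp [Tfun, h0, jAct] <;> ring
    · by_cases h1 : l = l1
      · subst h1
        fin_cases s <;> simp [Tfun, h0, jAct] <;> ring
      · simp [Tfun, h0, h1]
  map_smul' a x := by
    funext p; obtain ⟨s, l⟩ := p
    by_cases h0 : l = l0
    · fin_cases s <;> simp [Tfun, h0, jAct] <;> ring
    · by_cases h1 : l = l1
      · subst h1
        fin_cases s <;> simp [Tfun, h0, jAct] <;> ring
      · simp [Tfun, h0, h1]

def Teq (l0 l1 : Fin r) (h : l0 ≠ l1) :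
    ((Fin 4 × Fin r) → ℝ) ≃ₗ[ℝ] ((Fin 4 × Fin r) → ℝ) :=
  LinearEquiv.ofLinear (Tmap l0 l1 1) (Tmap l0 l1 (-1))
    (by
      ext x p; obtain ⟨s, l⟩ := p
      by_cases h0 : l = l0
      · fin_cases s <;>
          simp [Tmap, Tfun, h0, h, h.symm, jAct] <;> ring
      · by_cases h1 : l = l1
        · subst h1
          fin_cases s <;>
            simp [Tmap, Tfun, h0, jAct] <;> ring
        · simp [Tmap, Tfun, h0, h1])
    (by
      ext x p; obtain ⟨s, l⟩ := p
      by_cases h0 : l = l0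
      · fin_cases s <;>
          simp [Tmap, Tfun, h0, h, h.symm, jAct] <;> ring
      · by_cases h1 : l = l1
        · subst h1
          fin_cases s <;>
            simp [Tmap, Tfun, h0, jAct] <;> ring
        · simp [Tmap, Tfun, h0, h1])

lemma Teq_apply (l0 l1 : Fin r) (h : l0 ≠ l1) (x) (p) :
    Teq l0 l1 h x p = Tfun l0 l1 1 x p := rfl

end Gens


/-! ### Preservation lemmas -/

section Pres
variable {r : ℕ}

lemma Bval_expand (c : Fin 4 → ℝ) (σ : Fin 4 → Fin 4) (x y : (Fin 4 × Fin r) → ℝ) :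
    Bval r c σ x y = ∑ l : Fin r,
      (c 0 * x (0, l) * y (σ 0, l) + c 1 * x (1, l) * y (σ 1, l) +
       c 2 * x (2, l) * y (σ 2, l) + c 3 * x (3, l) * y (σ 3, l)) := by
  rw [Bval, Fintype.sum_prod_type_right]
  exact Finset.sum_congr rfl fun l _ => by rw [Fin.sum_univ_four]

lemma sum_split {l0 l1 : Fin r} (h : l0 ≠ l1) (f : Fin r → ℝ) :
    ∑ l, f l = ∑ l ∈ Finset.univ \ ({l0, l1} : Finset (Fin r)), f l + (f l0 + f l1) := by
  rw [← Finset.sum_pair h, Finset.sum_sdiff (Finset.subset_univ _)]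

lemma Neq_pres (c : Fin 4 → ℝ) (σ : Fin 4 → Fin 4) (m : Fin r) (x y) :
    Bval r c σ (Neq m x) (Neq m y) = Bval r c σ x y := by
  refine Finset.sum_congr rfl fun p _ => ?_
  by_cases h : p.2 = m <;> simp [Neq_apply, h] <;> ring

lemma Peq_pres (c : Fin 4 → ℝ) (σ : Fin 4 → Fin 4) (m m' : Fin r) (x y) :
    Bval r c σ (Peq m m' x) (Peq m m' y) = Bval r c σ x y := by
  exact Fintype.sum_equiv (Equiv.prodCongr (Equiv.refl (Fin 4)) (Equiv.swap m m'))
    _ _ (fun p => rfl)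

lemma Li_pres1 (x y : (Fin 4 × Fin r) → ℝ) :
    Bval r eps id (Lieq x) (Lieq y) = Bval r eps id x y := by
  rw [Bval_expand, Bval_expand]
  refine Finset.sum_congr rfl fun l _ => ?_
  simp [Lieq_apply, eps]; ring

lemma Li_pres2 (x y : (Fin 4 × Fin r) → ℝ) :
    Bval r (fun _ => 1) tau (Lieq x) (Lieq y) = Bval r (fun _ => 1) tau x y := by
  rw [Bval_expand, Bval_expand]
  refine Finset.sum_congr rfl fun l _ => ?_
  simp [Lieq_apply, tau]; ring

lemma Li_pres3 (x y : (Fin 4 × Fin r) → ℝ) :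
    Bval r eta rho (Lieq x) (Lieq y) = Bval r eta rho x y := by
  rw [Bval_expand, Bval_expand]
  refine Finset.sum_congr rfl fun l _ => ?_
  simp [Lieq_apply, eta, rho]; ring


lemma Teq_pres1 {l0 l1 : Fin r} (h : l0 ≠ l1) (x y : (Fin 4 × Fin r) → ℝ) :
    Bval r eps id (Teq l0 l1 h x) (Teq l0 l1 h y) = Bval r eps id x y := by
  have h' : ¬ l1 = l0 := Ne.symm h
  rw [Bval_expand, Bval_expand, sum_split h, sum_split h]
  congr 1
  · refine Finset.sum_congr rfl fun l hl => ?_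
    simp only [Finset.mem_sdiff, Finset.mem_insert, Finset.mem_singleton] at hl
    push_neg at hl
    simp [Teq_apply, Tfun, hl.2.1, hl.2.2]
  · simp [Teq_apply, Tfun, h', jAct, eps, tau, rho, eta]
    ring

lemma Teq_pres2 {l0 l1 : Fin r} (h : l0 ≠ l1) (x y : (Fin 4 × Fin r) → ℝ) :
    Bval r (fun _ => (1:ℝ)) tau (Teq l0 l1 h x) (Teq l0 l1 h y) = Bval r (fun _ => (1:ℝ)) tau x y := by
  have h' : ¬ l1 = l0 := Ne.symm h
  rw [Bval_expand, Bval_expand, sum_split h, sum_split h]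
  congr 1
  · refine Finset.sum_congr rfl fun l hl => ?_
    simp only [Finset.mem_sdiff, Finset.mem_insert, Finset.mem_singleton] at hl
    push_neg at hl
    simp [Teq_apply, Tfun, hl.2.1, hl.2.2]
  · simp [Teq_apply, Tfun, h', jAct, eps, tau, rho, eta]
    ring

lemma Teq_pres3 {l0 l1 : Fin r} (h : l0 ≠ l1) (x y : (Fin 4 × Fin r) → ℝ) :
    Bval r eta rho (Teq l0 l1 h x) (Teq l0 l1 h y) = Bval r eta rho x y := by
  have h' : ¬ l1 = l0 := Ne.symm h
  rw [Bval_expand, Bval_expand, sum_split h, sum_split h]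
  congr 1
  · refine Finset.sum_congr rfl fun l hl => ?_
    simp only [Finset.mem_sdiff, Finset.mem_insert, Finset.mem_singleton] at hl
    push_neg at hl
    simp [Teq_apply, Tfun, hl.2.1, hl.2.2]
  · simp [Teq_apply, Tfun, h', jAct, eps, tau, rho, eta]
    ring

end Pres


/-! ### Symmetry, nondegeneracy, basis values -/

section Vals
variable {r : ℕ}

lemma Bval_symm1 (x y : (Fin 4 × Fin r) → ℝ) :
    Bval r eps id x y = Bval r eps id y x :=
  Finset.sum_congr rfl fun p _ => by simp; ring

lemma Bval_symm2 (x y : (Fin 4 × Fin r) → ℝ) :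
    Bval r (fun _ => 1) tau x y = Bval r (fun _ => 1) tau y x := by
  have htt : ∀ s : Fin 4, tau (tau s) = s := by decide
  refine Fintype.sum_equiv
    (Equiv.prodCongr (⟨tau, tau, htt, htt⟩ : Fin 4 ≃ Fin 4) (Equiv.refl (Fin r))) _ _
    fun p => ?_
  simp [htt, Prod.map]; ring

lemma Bval_symm3 (x y : (Fin 4 × Fin r) → ℝ) :
    Bval r eta rho x y = Bval r eta rho y x := by
  have hrr : ∀ s : Fin 4, rho (rho s) = s := by decide
  have her : ∀ s : Fin 4, eta (rho s) = eta s := by intro s; fin_cases s <;> norm_num [eta, rho, Matrix.cons_val_three, Matrix.cons_val_two]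
  refine Fintype.sum_equiv
    (Equiv.prodCongr (⟨rho, rho, hrr, hrr⟩ : Fin 4 ≃ Fin 4) (Equiv.refl (Fin r))) _ _
    fun p => ?_
  simp [hrr, her, Prod.map]; ring

lemma Bval_single_right (c : Fin 4 → ℝ) (σ : Fin 4 → Fin 4) (hσ : ∀ s, σ (σ s) = s)
    (x : (Fin 4 × Fin r) → ℝ) (p0 : Fin 4 × Fin r) :
    Bval r c σ x (Pi.single p0 1) = c (σ p0.1) * x (σ p0.1, p0.2) := by
  rw [Bval, Finset.sum_eq_single (σ p0.1, p0.2)]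
  · have hp : (σ (σ p0.1), p0.2) = p0 := by rw [hσ]
    rw [hp, Pi.single_eq_same, mul_one]
  · intro b _ hb
    have hne : (σ b.1, b.2) ≠ p0 := by
      intro heq
      apply hb
      obtain ⟨s0, l0⟩ := p0
      rw [Prod.mk.injEq] at heq
      refine Prod.ext ?_ heq.2
      show b.1 = σ s0
      rw [← heq.1, hσ]
    rw [Pi.single_eq_of_ne hne, mul_zero]
  · intro hmem; exact absurd (Finset.mem_univ _) hmem

/-- block coefficient matrices for the diagonalizing bases of `B₂, B₃` -/
def D2 : Fin 4 → Fin 4 → ℝ := ![![1,0,1,0],![0,1,0,1],![1/2,0,-1/2,0],![0,1/2,0,-1/2]]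
def D2' : Fin 4 → Fin 4 → ℝ := ![![1/2,0,1,0],![0,1/2,0,1],![1/2,0,-1,0],![0,1/2,0,-1]]
def D3 : Fin 4 → Fin 4 → ℝ := ![![1,0,0,1],![0,1,1,0],![0,-1/2,1/2,0],![1/2,0,0,-1/2]]
def D3' : Fin 4 → Fin 4 → ℝ := ![![1/2,0,0,1],![0,1/2,-1,0],![0,1/2,1,0],![1/2,0,0,-1]]

def blockMap (D : Fin 4 → Fin 4 → ℝ) :
    ((Fin 4 × Fin r) → ℝ) →ₗ[ℝ] ((Fin 4 × Fin r) → ℝ) where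
  toFun x := fun p => ∑ s, D p.1 s * x (s, p.2)
  map_add' x y := by
    funext p; simp [Fin.sum_univ_four]; ring
  map_smul' a x := by
    funext p; simp [Fin.sum_univ_four]; ring

lemma blockMap_apply (D : Fin 4 → Fin 4 → ℝ) (x : (Fin 4 × Fin r) → ℝ) (p) :
    blockMap D x p = ∑ s, D p.1 s * x (s, p.2) := rfl

def blockEq2 : ((Fin 4 × Fin r) → ℝ) ≃ₗ[ℝ] ((Fin 4 × Fin r) → ℝ) :=
  LinearEquiv.ofLinear (blockMap D2) (blockMap D2')
    (by refine LinearMap.ext fun x => funext fun p => ?_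
        obtain ⟨s, l⟩ := p
        fin_cases s <;> simp [blockMap, Fin.sum_univ_four, D2, D2'] <;> ring)
    (by refine LinearMap.ext fun x => funext fun p => ?_
        obtain ⟨s, l⟩ := p
        fin_cases s <;> simp [blockMap, Fin.sum_univ_four, D2, D2'] <;> ring)

def blockEq3 : ((Fin 4 × Fin r) → ℝ) ≃ₗ[ℝ] ((Fin 4 × Fin r) → ℝ) :=
  LinearEquiv.ofLinear (blockMap D3) (blockMap D3')
    (by refine LinearMap.ext fun x => funext fun p => ?_
        obtain ⟨s, l⟩ := p
        fin_cases s <;> simp [blockMap, Fin.sum_univ_four, D3, D3'] <;> ring)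
    (by refine LinearMap.ext fun x => funext fun p => ?_
        obtain ⟨s, l⟩ := p
        fin_cases s <;> simp [blockMap, Fin.sum_univ_four, D3, D3'] <;> ring)

lemma blockMap_single (D : Fin 4 → Fin 4 → ℝ) (p0 : Fin 4 × Fin r) :
    blockMap D (Pi.single p0 1) = fun p => if p.2 = p0.2 then D p.1 p0.1 else 0 := by
  obtain ⟨s0, l0⟩ := p0
  funext p
  by_cases h : p.2 = l0 <;>
    fin_cases s0 <;>
      simp [blockMap, Fin.sum_univ_four, Pi.single_apply, Prod.ext_iff, h]

lemma Bval_block (c : Fin 4 → ℝ) (σ : Fin 4 → Fin 4) (D : Fin 4 → Fin 4 → ℝ)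
    (s0 s1 : Fin 4) (l0 l1 : Fin r) :
    Bval r c σ (blockMap D (Pi.single (s0, l0) 1)) (blockMap D (Pi.single (s1, l1) 1)) =
      if l0 = l1 then ∑ s, c s * D s s0 * D (σ s) s1 else 0 := by
  rw [blockMap_single, blockMap_single, Bval_expand]
  by_cases h : l0 = l1
  · subst h
    rw [if_pos rfl, Fin.sum_univ_four, Finset.sum_eq_single l0]
    · simp
    · intro l _ hl; simp [hl]
    · intro hmem; exact absurd (Finset.mem_univ _) hmem
  · rw [if_neg h]
    refine Finset.sum_eq_zero fun l _ => ?_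
    by_cases h0 : l = l0
    · subst h0
      have h1 : ¬ l = l1 := h
      simp [h1]
    · simp [h0]

lemma D2_diag (s0 s1 : Fin 4) :
    (∑ s, (1:ℝ) * D2 s s0 * D2 (tau s) s1) = if s0 = s1 then eps s0 else 0 := by
  fin_cases s0 <;> fin_cases s1 <;>
    norm_num [Fin.sum_univ_four, D2, tau, eps, Fin.ext_iff, Matrix.cons_val_three, Matrix.cons_val_two]

lemma D3_diag (s0 s1 : Fin 4) :
    (∑ s, eta s * D3 s s0 * D3 (rho s) s1) = if s0 = s1 then eps s0 else 0 := by
  fin_cases s0 <;> fin_cases s1 <;>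
    norm_num [Fin.sum_univ_four, D3, rho, eta, eps, Fin.ext_iff, Matrix.cons_val_three, Matrix.cons_val_two]

lemma eps_sign (r : ℕ) (i : Fin (2*(2*r))) :
    eps ((ee r).symm i).1 = if (i : ℕ) < 2*r then (1:ℝ) else -1 := by
  obtain ⟨p, rfl⟩ := (ee r).surjective i
  rw [Equiv.symm_apply_apply, ee_val]
  obtain ⟨s, l⟩ := p
  have hl := l.isLt
  fin_cases s
  · rw [if_pos (by simp; omega)]; norm_num [eps]
  · rw [if_pos (by simp; omega)]; norm_num [eps]
  · rw [if_neg (by simp; omega)]; norm_num [eps]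
  · rw [if_neg (by simp; omega)]; norm_num [eps]

end Vals


/-! ### The group -/

section Grp
variable (r : ℕ)

def presv (g : GL (Fin (2*(2*r))) ℝ) (B : LinearMap.BilinForm ℝ (Fin (2*(2*r)) → ℝ)) : Prop :=
  ∀ v w, B ((g : Matrix (Fin (2*(2*r))) (Fin (2*(2*r))) ℝ).mulVec v)
           ((g : Matrix (Fin (2*(2*r))) (Fin (2*(2*r))) ℝ).mulVec w) = B v w

variable {r}

lemma presv_one (B) : presv r 1 B := by
  intro v w
  simp [presv, Units.val_one]

lemma presv_mul {g h : GL (Fin (2*(2*r))) ℝ} {B} (hg : presv r g B) (hh : presv r h B) :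
    presv r (g * h) B := by
  intro v w
  have e : ∀ u, ((g * h : GL (Fin (2*(2*r))) ℝ) : Matrix (Fin (2*(2*r))) (Fin (2*(2*r))) ℝ).mulVec u
      = (g : Matrix (Fin (2*(2*r))) (Fin (2*(2*r))) ℝ).mulVec ((h : Matrix (Fin (2*(2*r))) (Fin (2*(2*r))) ℝ).mulVec u) := by
    intro u; rw [Units.val_mul, Matrix.mulVec_mulVec]
  rw [e, e, hg, hh]

lemma presv_inv {g : GL (Fin (2*(2*r))) ℝ} {B} (hg : presv r g B) :
    presv r g⁻¹ B := by
  intro v w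
  have hv : ∀ u, (g : Matrix (Fin (2*(2*r))) (Fin (2*(2*r))) ℝ).mulVec (((g⁻¹ : GL (Fin (2*(2*r))) ℝ) : Matrix (Fin (2*(2*r))) (Fin (2*(2*r))) ℝ).mulVec u) = u := by
    intro u
    rw [Matrix.mulVec_mulVec, ← Units.val_mul, mul_inv_cancel, Units.val_one, Matrix.one_mulVec]
  have h := hg (((g⁻¹ : GL (Fin (2*(2*r))) ℝ) : Matrix (Fin (2*(2*r))) (Fin (2*(2*r))) ℝ).mulVec v)
      (((g⁻¹ : GL (Fin (2*(2*r))) ℝ) : Matrix (Fin (2*(2*r))) (Fin (2*(2*r))) ℝ).mulVec w)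
  rw [hv, hv] at h
  exact h.symm

variable (r)

def Gr : Subgroup (GL (Fin (2*(2*r))) ℝ) where
  carrier := {g | presv r g (BB r (b1 r)) ∧ presv r g (BB r (b2 r)) ∧ presv r g (BB r (b3 r))}
  one_mem' := ⟨presv_one _, presv_one _, presv_one _⟩
  mul_mem' := fun ha hb =>
    ⟨presv_mul ha.1 hb.1, presv_mul ha.2.1 hb.2.1, presv_mul ha.2.2 hb.2.2⟩
  inv_mem' := fun ha => ⟨presv_inv ha.1, presv_inv ha.2.1, presv_inv ha.2.2⟩

lemma mem_Gr {g} : g ∈ Gr r ↔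
    presv r g (BB r (b1 r)) ∧ presv r g (BB r (b2 r)) ∧ presv r g (BB r (b3 r)) :=
  Iff.rfl

lemma mkB_apply (c σ) (x y : (Fin 4 × Fin r) → ℝ) : mkB r c σ x y = Bval r c σ x y := rfl

lemma lift_mem (f : ((Fin 4 × Fin r) → ℝ) ≃ₗ[ℝ] ((Fin 4 × Fin r) → ℝ))
    (h1 : ∀ x y, Bval r eps id (f x) (f y) = Bval r eps id x y)
    (h2 : ∀ x y, Bval r (fun _ => 1) tau (f x) (f y) = Bval r (fun _ => 1) tau x y)
    (h3 : ∀ x y, Bval r eta rho (f x) (f y) = Bval r eta rho x y) :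
    lift r f ∈ Gr r := by
  refine ⟨?_, ?_, ?_⟩ <;> intro v w <;>
    rw [lift_mulVec, lift_mulVec, BB_apply, BB_apply, LinearEquiv.symm_apply_apply,
      LinearEquiv.symm_apply_apply]
  · exact h1 _ _
  · exact h2 _ _
  · exact h3 _ _

lemma Neq_mem (m : Fin r) : lift r (Neq m) ∈ Gr r :=
  lift_mem r _ (Neq_pres _ _ m) (Neq_pres _ _ m) (Neq_pres _ _ m)

lemma Lieq_mem : lift r Lieq ∈ Gr r :=
  lift_mem r _ Li_pres1 Li_pres2 Li_pres3

lemma Peq_mem (m m' : Fin r) : lift r (Peq m m') ∈ Gr r :=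
  lift_mem r _ (Peq_pres _ _ m m') (Peq_pres _ _ m m') (Peq_pres _ _ m m')

lemma Teq_mem {l0 l1 : Fin r} (h : l0 ≠ l1) : lift r (Teq l0 l1 h) ∈ Gr r :=
  lift_mem r _ (Teq_pres1 h) (Teq_pres2 h) (Teq_pres3 h)

end Grp


/-! ### Block-supported vectors -/

section Blk
variable {r : ℕ}

def blkAt (m : Fin r) (B : Fin 4 → ℝ) : (Fin 4 × Fin r) → ℝ :=
  fun p => if p.2 = m then B p.1 else 0

lemma Neq_sub_blk (m : Fin r) (x : (Fin 4 × Fin r) → ℝ) :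
    x - Neq m x = blkAt m (fun s => 2 * x (s, m)) := by
  funext p
  by_cases h : p.2 = m
  · have hp : p = (p.1, m) := by rw [← h]
    rw [hp]
    simp [Neq_apply, blkAt]
    ring
  · simp [Neq_apply, blkAt, h]

lemma Li_blk (m : Fin r) (B : Fin 4 → ℝ) :
    Lieq (blkAt m B) = blkAt m (iAct B) := by
  funext p
  obtain ⟨s, l⟩ := p
  by_cases h : l = m <;> fin_cases s <;> simp [Lieq_apply, blkAt, iAct, h]

lemma P_blk (m m' : Fin r) (B : Fin 4 → ℝ) :
    Peq m m' (blkAt m B) = blkAt m' B := by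
  funext p
  have key : (Equiv.swap m m' p.2 = m) ↔ (p.2 = m') := by
    constructor
    · intro h
      have := congrArg (Equiv.swap m m') h
      rwa [Equiv.swap_apply_self, Equiv.swap_apply_left] at this
    · intro h; rw [h, Equiv.swap_apply_right]
  by_cases h : p.2 = m'
  · rw [Peq_apply, blkAt, blkAt, if_pos (key.2 h), if_pos h]
  · rw [Peq_apply, blkAt, blkAt, if_neg (fun hc => h (key.1 hc)), if_neg h]

lemma T_blk {l0 l1 : Fin r} (h : l0 ≠ l1) (B : Fin 4 → ℝ) :
    Teq l0 l1 h (blkAt l0 B) - (5/4 : ℝ) • blkAt l0 B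
      = blkAt l1 (fun s => -(3/4) * jAct B s) := by
  have h' : ¬ l1 = l0 := Ne.symm h
  funext p
  obtain ⟨s, l⟩ := p
  by_cases h0 : l = l0
  · subst h0
    fin_cases s <;> simp [Teq_apply, Tfun, blkAt, jAct, h', h] <;> ring
  · by_cases h1 : l = l1
    · subst h1
      fin_cases s <;> simp [Teq_apply, Tfun, blkAt, jAct, h', h0] <;> ring
    · simp [Teq_apply, Tfun, blkAt, h0, h1]

lemma smul_blk (a : ℝ) (m : Fin r) (B : Fin 4 → ℝ) :
    (a • blkAt m B : (Fin 4 × Fin r) → ℝ) = blkAt m (fun s => a * B s) := by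
  funext p
  by_cases h : p.2 = m <;> simp [blkAt, h]

lemma comb_blk (a b c d : ℝ) (m : Fin r) (B1 B2 B3 B4 : Fin 4 → ℝ) :
    ((a • blkAt m B1 + b • blkAt m B2 + c • blkAt m B3 + d • blkAt m B4 : (Fin 4 × Fin r) → ℝ))
      = blkAt m (fun s => a * B1 s + b * B2 s + c * B3 s + d * B4 s) := by
  funext p
  by_cases h : p.2 = m <;> simp [blkAt, h]

lemma blk_single (m : Fin r) (t : Fin 4) (lam : ℝ) :
    blkAt m (fun s => if s = t then lam else 0) = lam • (Pi.single (t, m) 1 : (Fin 4 × Fin r) → ℝ) := by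
  funext p
  obtain ⟨s, l⟩ := p
  by_cases h : l = m
  · subst h
    by_cases hs : s = t
    · subst hs; simp [blkAt, Pi.single_apply]
    · simp [blkAt, hs, Pi.single_apply, Prod.ext_iff]
  · simp [blkAt, h, Pi.single_apply, Prod.ext_iff, fun hc : l = m => h hc]

/-- coefficients recovering the standard block basis from `B, iB, jB, kB` -/
def Qc (B : Fin 4 → ℝ) : Fin 4 → Fin 4 → ℝ :=
  fun t => ![![B 0, -(B 1), -(B 2), -(B 3)],
             ![B 1, B 0, B 3, -(B 2)],
             ![B 2, -(B 3), B 0, B 1],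
             ![B 3, B 2, -(B 1), B 0]] t

lemma quat_comb (B : Fin 4 → ℝ) (t : Fin 4) :
    (fun s => Qc B t 0 * B s + Qc B t 1 * iAct B s + Qc B t 2 * jAct B s
        + Qc B t 3 * iAct (jAct B) s)
      = fun s => if s = t then (B 0^2 + B 1^2 + B 2^2 + B 3^2) else 0 := by
  funext s
  have e0 : (⟨0, by omega⟩ : Fin 4) = 0 := rfl
  have e1 : (⟨1, by omega⟩ : Fin 4) = 1 := rfl
  have e2 : (⟨2, by omega⟩ : Fin 4) = 2 := rfl
  have e3 : (⟨3, by omega⟩ : Fin 4) = 3 := rfl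
  have v0 : (((0:Fin 4)):ℕ) = 0 := rfl
  have v1 : (((1:Fin 4)):ℕ) = 1 := rfl
  have v2 : (((2:Fin 4)):ℕ) = 2 := rfl
  have v3 : (((3:Fin 4)):ℕ) = 3 := rfl
  fin_cases t <;> fin_cases s <;>
    norm_num [Qc, iAct, jAct, Fin.ext_iff, e0, e1, e2, e3, v0, v1, v2, v3, Matrix.cons_val_three, Matrix.cons_val_two] <;> ring

end Blk


/-! ### Final helpers -/

section Help
variable (r : ℕ)

lemma b1_apply (x y) : b1 r x y = Bval r eps id x y := rfl
lemma b2_apply (x y) : b2 r x y = Bval r (fun _ => 1) tau x y := rfl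
lemma b3_apply (x y) : b3 r x y = Bval r eta rho x y := rfl

lemma blockEq2_apply (x) : (blockEq2 : ((Fin 4 × Fin r) → ℝ) ≃ₗ[ℝ] _) x = blockMap D2 x := rfl
lemma blockEq3_apply (x) : (blockEq3 : ((Fin 4 × Fin r) → ℝ) ≃ₗ[ℝ] _) x = blockMap D3 x := rfl

lemma pk_symm_single (i : Fin (2*(2*r))) :
    (pk r).symm (Pi.single i 1) = Pi.single ((ee r).symm i) 1 := by
  funext p
  rw [pk_symm_apply, Pi.single_apply, Pi.single_apply]
  simp [Equiv.apply_eq_iff_eq_symm_apply]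

lemma eq_sum_single (x : (Fin 4 × Fin r) → ℝ) :
    x = ∑ p, x p • (Pi.single p 1 : (Fin 4 × Fin r) → ℝ) := by
  funext q
  rw [Finset.sum_apply, Finset.sum_eq_single q]
  · simp
  · intro b _ hb
    simp [Pi.single_apply, Ne.symm hb]
  · intro h; exact absurd (Finset.mem_univ _) h

end Help

end
end TF22


open Matrix
namespace TF22
noncomputable section
set_option maxHeartbeats 2000000
set_option synthInstance.maxHeartbeats 400000

variable (r : ℕ)

lemma nondeg1 : ∀ v, (∀ w, BB r (b1 r) v w = 0) → v = 0 := by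
    intro v hv
    have hx : ∀ p0 : Fin 4 × Fin r, (pk r).symm v p0 = 0 := by
      intro p0
      have h := hv (pk r (Pi.single p0 1))
      rw [BB_apply, LinearEquiv.symm_apply_apply, b1_apply,
        Bval_single_right eps id (fun s => rfl)] at h
      obtain ⟨s, l⟩ := p0
      fin_cases s <;> norm_num [eps] at h <;> exact h
    have h0 : (pk r).symm v = 0 := funext hx
    calc v = pk r ((pk r).symm v) := (LinearEquiv.apply_symm_apply _ _).symm
    _ = 0 := by rw [h0, map_zero]

lemma nondeg2 : ∀ v, (∀ w, BB r (b2 r) v w = 0) → v = 0 := by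
    have htt : ∀ s : Fin 4, tau (tau s) = s := by decide
    intro v hv
    have hx : ∀ p0 : Fin 4 × Fin r, (pk r).symm v p0 = 0 := by
      intro p0
      have h := hv (pk r (Pi.single (tau p0.1, p0.2) 1))
      rw [BB_apply, LinearEquiv.symm_apply_apply, b2_apply,
        Bval_single_right (fun _ => 1) tau htt] at h
      simpa [htt] using h
    have h0 : (pk r).symm v = 0 := funext hx
    calc v = pk r ((pk r).symm v) := (LinearEquiv.apply_symm_apply _ _).symm
    _ = 0 := by rw [h0, map_zero]

lemma nondeg3 : ∀ v, (∀ w, BB r (b3 r) v w = 0) → v = 0 := by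
    have hrr : ∀ s : Fin 4, rho (rho s) = s := by decide
    intro v hv
    have hx : ∀ p0 : Fin 4 × Fin r, (pk r).symm v p0 = 0 := by
      intro p0
      have h := hv (pk r (Pi.single (rho p0.1, p0.2) 1))
      rw [BB_apply, LinearEquiv.symm_apply_apply, b3_apply,
        Bval_single_right eta rho hrr] at h
      rw [show rho (rho p0.1, p0.2).1 = p0.1 from hrr p0.1] at h
      obtain ⟨s, l⟩ := p0
      fin_cases s <;> norm_num [eta] at h <;> exact h
    have h0 : (pk r).symm v = 0 := funext hx
    calc v = pk r ((pk r).symm v) := (LinearEquiv.apply_symm_apply _ _).symm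
    _ = 0 := by rw [h0, map_zero]

lemma linIndep (hr : 2 ≤ r) : LinearIndependent ℝ ![BB r (b1 r), BB r (b2 r), BB r (b3 r)] := by
    have htt : ∀ s : Fin 4, tau (tau s) = s := by decide
    have hrr : ∀ s : Fin 4, rho (rho s) = s := by decide
    have hFT := Fintype.linearIndependent_iff
      (R := ℝ) (v := ![BB r (b1 r), BB r (b2 r), BB r (b3 r)])
    refine hFT.mpr ?_
    intro g hg
    rw [Fin.sum_univ_three] at hg
    simp only [Matrix.cons_val_zero, Matrix.cons_val_one, Matrix.head_cons] at hg
    have hvw : ∀ v w, g 0 * BB r (b1 r) v w + g 1 * BB r (b2 r) v w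
        + g 2 * BB r (b3 r) v w = 0 := by
      intro v w
      have h := LinearMap.congr_fun (LinearMap.congr_fun hg v) w
      simpa [smul_eq_mul] using h
    have hl0 : (0 : ℕ) < r := by omega
    set ll : Fin r := ⟨0, hl0⟩ with hll
    have v0 : (((0 : Fin 4)) : ℕ) = 0 := rfl
    have v1 : (((1 : Fin 4)) : ℕ) = 1 := rfl
    have v2 : (((2 : Fin 4)) : ℕ) = 2 := rfl
    have v3 : (((3 : Fin 4)) : ℕ) = 3 := rfl
    have V1 : ∀ a b : Fin 4, BB r (b1 r) (pk r (Pi.single ((a : Fin 4), ll) 1))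
        (pk r (Pi.single ((b : Fin 4), ll) 1))
        = eps b * (if ((b : Fin 4), ll) = ((a : Fin 4), ll) then 1 else 0) := by
      intro a b
      rw [BB_apply, LinearEquiv.symm_apply_apply, LinearEquiv.symm_apply_apply, b1_apply,
        Bval_single_right eps id (fun s => rfl), Pi.single_apply]
      rfl
    have V2 : ∀ a b : Fin 4, BB r (b2 r) (pk r (Pi.single ((a : Fin 4), ll) 1))
        (pk r (Pi.single ((b : Fin 4), ll) 1))
        = (if (tau b, ll) = ((a : Fin 4), ll) then 1 else 0) := by
      intro a b
      rw [BB_apply, LinearEquiv.symm_apply_apply, LinearEquiv.symm_apply_apply, b2_apply,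
        Bval_single_right (fun _ => 1) tau htt, Pi.single_apply, one_mul]
    have V3 : ∀ a b : Fin 4, BB r (b3 r) (pk r (Pi.single ((a : Fin 4), ll) 1))
        (pk r (Pi.single ((b : Fin 4), ll) 1))
        = eta (rho b) * (if (rho b, ll) = ((a : Fin 4), ll) then 1 else 0) := by
      intro a b
      rw [BB_apply, LinearEquiv.symm_apply_apply, LinearEquiv.symm_apply_apply, b3_apply,
        Bval_single_right eta rho hrr, Pi.single_apply]
    have h00 := hvw (pk r (Pi.single ((0 : Fin 4), ll) 1)) (pk r (Pi.single ((0 : Fin 4), ll) 1))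
    rw [V1 0 0, V2 0 0, V3 0 0] at h00
    norm_num [eps, tau, rho, eta, Prod.ext_iff, Fin.ext_iff, v0, v1, v2, v3] at h00
    have h02 := hvw (pk r (Pi.single ((0 : Fin 4), ll) 1)) (pk r (Pi.single ((2 : Fin 4), ll) 1))
    rw [V1 0 2, V2 0 2, V3 0 2] at h02
    norm_num [eps, tau, rho, eta, Prod.ext_iff, Fin.ext_iff, v0, v1, v2, v3, Matrix.cons_val_three, Matrix.cons_val_two] at h02
    have h03 := hvw (pk r (Pi.single ((0 : Fin 4), ll) 1)) (pk r (Pi.single ((3 : Fin 4), ll) 1))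
    rw [V1 0 3, V2 0 3, V3 0 3] at h03
    norm_num [eps, tau, rho, eta, Prod.ext_iff, Fin.ext_iff, v0, v1, v2, v3, Matrix.cons_val_three, Matrix.cons_val_two] at h03
    intro i
    fin_cases i
    · exact h00
    · exact h02
    · exact h03

lemma basis1 : ∃ e : Module.Basis (Fin (2 * (2 * r))) ℝ (Fin (2 * (2 * r)) → ℝ), ∀ i j,
    BB r (b1 r) (e i) (e j) = if i = j then (if (i : ℕ) < 2 * r then 1 else -1) else 0 := by
    refine ⟨Pi.basisFun ℝ (Fin (2*(2*r))), fun i j => ?_⟩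
    rw [Pi.basisFun_apply, Pi.basisFun_apply, BB_apply, pk_symm_single, pk_symm_single,
      b1_apply, Bval_single_right eps id (fun s => rfl)]
    by_cases hij : i = j
    · subst hij
      rw [if_pos rfl]
      simp only [id_eq, Prod.mk.eta, Pi.single_eq_same, mul_one]
      exact eps_sign r i
    · rw [if_neg hij]
      simp only [id_eq, Prod.mk.eta]
      rw [Pi.single_eq_of_ne (fun h => hij ((ee r).symm.injective h).symm), mul_zero]

lemma basis2 : ∃ e : Module.Basis (Fin (2 * (2 * r))) ℝ (Fin (2 * (2 * r)) → ℝ), ∀ i j,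
    BB r (b2 r) (e i) (e j) = if i = j then (if (i : ℕ) < 2 * r then 1 else -1) else 0 := by
    refine ⟨(Pi.basisFun ℝ (Fin (2*(2*r)))).map
      (((pk r).symm.trans ((blockEq2 : ((Fin 4 × Fin r) → ℝ) ≃ₗ[ℝ] _).trans (pk r)))),
      fun i j => ?_⟩
    rw [Module.Basis.map_apply, Module.Basis.map_apply, Pi.basisFun_apply, Pi.basisFun_apply]
    rw [LinearEquiv.trans_apply, LinearEquiv.trans_apply,
        LinearEquiv.trans_apply, LinearEquiv.trans_apply]
    rw [BB_apply, LinearEquiv.symm_apply_apply, LinearEquiv.symm_apply_apply]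
    rw [pk_symm_single, pk_symm_single, blockEq2_apply, blockEq2_apply, b2_apply]
    rw [Bval_block (fun _ => 1) tau D2 ((ee r).symm i).1 ((ee r).symm j).1
      ((ee r).symm i).2 ((ee r).symm j).2, D2_diag]
    by_cases hij : i = j
    · subst hij
      rw [if_pos rfl, if_pos rfl, if_pos rfl]
      exact eps_sign r i
    · rw [if_neg hij]
      by_cases hl : ((ee r).symm i).2 = ((ee r).symm j).2
      · have hs : ((ee r).symm i).1 ≠ ((ee r).symm j).1 := by
          intro hs
          exact hij ((ee r).symm.injective (Prod.ext hs hl))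
        rw [if_pos hl, if_neg hs]
      · rw [if_neg hl]

lemma basis3 : ∃ e : Module.Basis (Fin (2 * (2 * r))) ℝ (Fin (2 * (2 * r)) → ℝ), ∀ i j,
    BB r (b3 r) (e i) (e j) = if i = j then (if (i : ℕ) < 2 * r then 1 else -1) else 0 := by
    refine ⟨(Pi.basisFun ℝ (Fin (2*(2*r)))).map
      (((pk r).symm.trans ((blockEq3 : ((Fin 4 × Fin r) → ℝ) ≃ₗ[ℝ] _).trans (pk r)))),
      fun i j => ?_⟩
    rw [Module.Basis.map_apply, Module.Basis.map_apply, Pi.basisFun_apply, Pi.basisFun_apply]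
    rw [LinearEquiv.trans_apply, LinearEquiv.trans_apply,
        LinearEquiv.trans_apply, LinearEquiv.trans_apply]
    rw [BB_apply, LinearEquiv.symm_apply_apply, LinearEquiv.symm_apply_apply]
    rw [pk_symm_single, pk_symm_single, blockEq3_apply, blockEq3_apply, b3_apply]
    rw [Bval_block eta rho D3 ((ee r).symm i).1 ((ee r).symm j).1
      ((ee r).symm i).2 ((ee r).symm j).2, D3_diag]
    by_cases hij : i = j
    · subst hij
      rw [if_pos rfl, if_pos rfl, if_pos rfl]
      exact eps_sign r i
    · rw [if_neg hij]
      by_cases hl : ((ee r).symm i).2 = ((ee r).symm j).2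
      · have hs : ((ee r).symm i).1 ≠ ((ee r).symm j).1 := by
          intro hs
          exact hij ((ee r).symm.injective (Prod.ext hs hl))
        rw [if_pos hl, if_neg hs]
      · rw [if_neg hl]

lemma irred (hr : 2 ≤ r) : ∀ W : Submodule ℝ (Fin (2 * (2 * r)) → ℝ),
    (∀ g ∈ Gr r, ∀ v ∈ W,
      (g : Matrix (Fin (2 * (2 * r))) (Fin (2 * (2 * r))) ℝ).mulVec v ∈ W) →
    W = ⊥ ∨ W = ⊤ := by
    intro W hW
    by_cases hb : W = ⊥
    · exact Or.inl hb
    refine Or.inr ?_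
    have step : ∀ (f : ((Fin 4 × Fin r) → ℝ) ≃ₗ[ℝ] ((Fin 4 × Fin r) → ℝ)),
        lift r f ∈ Gr r → ∀ x, pk r x ∈ W → pk r (f x) ∈ W := by
      intro f hf x hx
      have h := hW (lift r f) hf (pk r x) hx
      rwa [lift_mulVec, LinearEquiv.symm_apply_apply] at h
    obtain ⟨v0, hv0W, hv0⟩ := (Submodule.ne_bot_iff W).1 hb
    have hx0W : pk r ((pk r).symm v0) ∈ W := by rwa [LinearEquiv.apply_symm_apply]
    have hx0 : (pk r).symm v0 ≠ 0 := by
      intro h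
      exact hv0 (by rw [← LinearEquiv.apply_symm_apply (pk r) v0, h, map_zero])
    set x0 : (Fin 4 × Fin r) → ℝ := (pk r).symm v0 with hx0def
    obtain ⟨pstar, hp⟩ : ∃ p, x0 p ≠ 0 := by
      by_contra h; push_neg at h; exact hx0 (funext h)
    obtain ⟨sstar, mm⟩ := pstar
    have hl0 : (0 : ℕ) < r := by omega
    have hl1 : (1 : ℕ) < r := by omega
    set l0 : Fin r := ⟨0, hl0⟩ with hll0
    set l1 : Fin r := ⟨1, hl1⟩ with hll1
    have h01 : l0 ≠ l1 := Fin.ne_of_val_ne (by norm_num)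
    -- extract the coordinate-mm component and move it to l0
    have hyW : pk r (blkAt mm (fun s => 2 * x0 (s, mm))) ∈ W := by
      have h1 : pk r (Neq mm x0) ∈ W := step _ (Neq_mem r mm) _ hx0W
      have h2 : pk r (x0 - Neq mm x0) ∈ W := by
        rw [map_sub]; exact Submodule.sub_mem W hx0W h1
      rwa [Neq_sub_blk] at h2
    set Bst : Fin 4 → ℝ := fun s => 2 * x0 (s, mm) with hBst
    have hqW : pk r (blkAt l0 Bst) ∈ W := by
      have h := step _ (Peq_mem r mm l0) _ hyW
      rwa [P_blk] at h
    have hBne : Bst sstar ≠ 0 := mul_ne_zero two_ne_zero hp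
    have hiW : pk r (blkAt l0 (iAct Bst)) ∈ W := by
      have h := step _ (Lieq_mem r) _ hqW
      rwa [Li_blk] at h
    have hjW : pk r (blkAt l0 (jAct Bst)) ∈ W := by
      have h1 : pk r (Teq l0 l1 h01 (blkAt l0 Bst)) ∈ W := step _ (Teq_mem r h01) _ hqW
      have h2 : pk r (Teq l0 l1 h01 (blkAt l0 Bst) - (5/4 : ℝ) • blkAt l0 Bst) ∈ W := by
        rw [map_sub, _root_.map_smul]
        exact Submodule.sub_mem W h1 (Submodule.smul_mem W _ hqW)
      rw [T_blk] at h2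
      have h3 : pk r (blkAt l0 (fun s => -(3/4) * jAct Bst s)) ∈ W := by
        have h := step _ (Peq_mem r l1 l0) _ h2
        rwa [P_blk] at h
      have h4 : pk r ((-(4/3) : ℝ) • blkAt l0 (fun s => -(3/4) * jAct Bst s)) ∈ W := by
        rw [_root_.map_smul]; exact Submodule.smul_mem W _ h3
      rwa [smul_blk,
        show (fun s => (-(4/3) : ℝ) * (-(3/4) * jAct Bst s)) = jAct Bst from
          funext fun s => by ring] at h4
    have hkW : pk r (blkAt l0 (iAct (jAct Bst))) ∈ W := by
      have h := step _ (Lieq_mem r) _ hjW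
      rwa [Li_blk] at h
    have hsingle0 : ∀ t : Fin 4, pk r (Pi.single ((t : Fin 4), l0) (1:ℝ)) ∈ W := by
      intro t
      have hlampos : 0 < Bst 0^2 + Bst 1^2 + Bst 2^2 + Bst 3^2 := by
        have h1 : 0 < Bst sstar ^ 2 := even_two.pow_pos hBne
        have h2 : Bst sstar ^ 2 ≤ ∑ s, Bst s ^ 2 :=
          Finset.single_le_sum (fun i _ => sq_nonneg (Bst i)) (Finset.mem_univ sstar)
        rw [Fin.sum_univ_four] at h2
        linarith
      have hcomb : pk r ((Qc Bst t 0) • blkAt l0 Bst + (Qc Bst t 1) • blkAt l0 (iAct Bst)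
          + (Qc Bst t 2) • blkAt l0 (jAct Bst)
          + (Qc Bst t 3) • blkAt l0 (iAct (jAct Bst))) ∈ W := by
        simp only [map_add, _root_.map_smul]
        exact Submodule.add_mem W (Submodule.add_mem W (Submodule.add_mem W
          (Submodule.smul_mem W _ hqW) (Submodule.smul_mem W _ hiW))
          (Submodule.smul_mem W _ hjW)) (Submodule.smul_mem W _ hkW)
      rw [comb_blk, quat_comb, blk_single, _root_.map_smul] at hcomb
      have h := Submodule.smul_mem W ((Bst 0^2 + Bst 1^2 + Bst 2^2 + Bst 3^2)⁻¹) hcomb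
      rwa [smul_smul, inv_mul_cancel₀ hlampos.ne', one_smul] at h
    have hsingleAll : ∀ p : Fin 4 × Fin r, pk r (Pi.single p (1:ℝ)) ∈ W := by
      rintro ⟨t, m⟩
      have h1 : blkAt l0 (fun s => if s = t then (1:ℝ) else 0)
          = (Pi.single ((t : Fin 4), l0) 1 : (Fin 4 × Fin r) → ℝ) := by
        rw [blk_single, one_smul]
      have h2 : pk r (blkAt l0 (fun s => if s = t then (1:ℝ) else 0)) ∈ W := by
        rw [h1]; exact hsingle0 t
      have h3 := step _ (Peq_mem r l0 m) _ h2
      rw [P_blk, blk_single, one_smul] at h3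
      exact h3
    rw [eq_top_iff]
    intro v _
    have hv : v = pk r ((pk r).symm v) := (LinearEquiv.apply_symm_apply _ _).symm
    rw [hv, eq_sum_single r ((pk r).symm v), map_sum]
    refine Submodule.sum_mem W fun p _ => ?_
    rw [_root_.map_smul]
    exact Submodule.smul_mem W _ (hsingleAll p)

end
end TF22


/-- **Theorem 2.2 (ii).** For `n = 2m`, `m = 2r`, `r ≥ 2` there exist three
linearly independent nondegenerate symmetric bilinear forms on `ℝⁿ`, each of
signature `(m, m)`, preserved by a subgroup of `GL(n, ℝ)` acting irreducibly. -/
theorem exists_three_forms_irreducible (r : ℕ) (hr : 2 ≤ r) :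
    ∃ (B₁ B₂ B₃ : LinearMap.BilinForm ℝ (Fin (2 * (2 * r)) → ℝ))
      (G : Subgroup (GL (Fin (2 * (2 * r))) ℝ)),
      (∀ v w, B₁ v w = B₁ w v) ∧ (∀ v w, B₂ v w = B₂ w v) ∧ (∀ v w, B₃ v w = B₃ w v) ∧
      (∀ v, (∀ w, B₁ v w = 0) → v = 0) ∧ (∀ v, (∀ w, B₂ v w = 0) → v = 0) ∧
      (∀ v, (∀ w, B₃ v w = 0) → v = 0) ∧
      LinearIndependent ℝ ![B₁, B₂, B₃] ∧
      (∃ e : Module.Basis (Fin (2 * (2 * r))) ℝ (Fin (2 * (2 * r)) → ℝ), ∀ i j,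
        B₁ (e i) (e j) = if i = j then (if (i : ℕ) < 2 * r then 1 else -1) else 0) ∧
      (∃ e : Module.Basis (Fin (2 * (2 * r))) ℝ (Fin (2 * (2 * r)) → ℝ), ∀ i j,
        B₂ (e i) (e j) = if i = j then (if (i : ℕ) < 2 * r then 1 else -1) else 0) ∧
      (∃ e : Module.Basis (Fin (2 * (2 * r))) ℝ (Fin (2 * (2 * r)) → ℝ), ∀ i j,
        B₃ (e i) (e j) = if i = j then (if (i : ℕ) < 2 * r then 1 else -1) else 0) ∧
      (∀ g ∈ G, ∀ v w : Fin (2 * (2 * r)) → ℝ,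
        B₁ ((g : Matrix (Fin (2 * (2 * r))) (Fin (2 * (2 * r))) ℝ).mulVec v)
           ((g : Matrix (Fin (2 * (2 * r))) (Fin (2 * (2 * r))) ℝ).mulVec w) = B₁ v w) ∧
      (∀ g ∈ G, ∀ v w : Fin (2 * (2 * r)) → ℝ,
        B₂ ((g : Matrix (Fin (2 * (2 * r))) (Fin (2 * (2 * r))) ℝ).mulVec v)
           ((g : Matrix (Fin (2 * (2 * r))) (Fin (2 * (2 * r))) ℝ).mulVec w) = B₂ v w) ∧
      (∀ g ∈ G, ∀ v w : Fin (2 * (2 * r)) → ℝ,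
        B₃ ((g : Matrix (Fin (2 * (2 * r))) (Fin (2 * (2 * r))) ℝ).mulVec v)
           ((g : Matrix (Fin (2 * (2 * r))) (Fin (2 * (2 * r))) ℝ).mulVec w) = B₃ v w) ∧
      (∀ W : Submodule ℝ (Fin (2 * (2 * r)) → ℝ),
        (∀ g ∈ G, ∀ v ∈ W,
          (g : Matrix (Fin (2 * (2 * r))) (Fin (2 * (2 * r))) ℝ).mulVec v ∈ W) →
        W = ⊥ ∨ W = ⊤) := by
  exact ⟨TF22.BB r (TF22.b1 r), TF22.BB r (TF22.b2 r), TF22.BB r (TF22.b3 r), TF22.Gr r,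
    (fun v w => TF22.Bval_symm1 ((TF22.pk r).symm v) ((TF22.pk r).symm w)),
    (fun v w => TF22.Bval_symm2 ((TF22.pk r).symm v) ((TF22.pk r).symm w)),
    (fun v w => TF22.Bval_symm3 ((TF22.pk r).symm v) ((TF22.pk r).symm w)),
    TF22.nondeg1 r, TF22.nondeg2 r, TF22.nondeg3 r,
    TF22.linIndep r hr,
    TF22.basis1 r, TF22.basis2 r, TF22.basis3 r,
    (fun g hg => hg.1), (fun g hg => hg.2.1), (fun g hg => hg.2.2),
    TF22.irred r hr⟩
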